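/- Let σ = τ_λ with λ ∈ {1, x, y}, let ε ∈ {1,-1}, and let u ∈ D be a nonzero ε-symmetric element (σ(u) = ε·u). Then there exists an invertible t ∈ D such that v := σ(t)·u·t satisfies exactly one of: (i) v = δ + αx with δ, α ∈ O_K and ν_D(v) = 0, or (ii) v = βy + γz with β, γ ∈ O_K and ν_D(v) = 1/2. That is, every one-dimensional ε-hermitian form over (D, σ) is isometric either to a form with unit diagonal entry in the O_K-span of {1, x}, or to a form with diagonal entry of value 1/2 in the O_K-span of {y, z}. -/

import Mathlib

/-!
Write `σ(t)·u·t = λ·(τ(t)·w·t)` with `w = μu`. Since `λ` is `τ`-symmetric or `τ`-skew, so is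
`w`: it is a scalar or a pure quaternion. `D = L ⊕ L·y` with `L = K(x)` is `ℤ/2`-graded, and
`ν ∘ Nrd` is even on `L` and odd on `L·y`: as `a` is a nonsquare unit, Hensel's lemma shows
that `p² - aq²` has value `2·min(ν p, ν q)`. A pure `w = αx + βy + γz` has
`w² = aα² + ϖ(β² - aγ²)`, two summands of values of different parity, so by Hensel again
`w² = w₀²` with `w₀` a multiple of `αx` or of `βy + γz`; conjugating by `w + w₀` makes `w`
proportional to `w₀`, hence homogeneous. Finally conjugation by `ϖʲ` or `ϖʲy` preserves
homogeneity and shifts `ν(Nrd)` by any even integer, which brings it to `0` or `1`.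
-/

noncomputable section

/-- A surjective discrete valuation `ν : K → ℤ` on a field `K`
(the value of `ν` at `0` is irrelevant: only nonzero elements are constrained). -/
structure DVal (K : Type) [Field K] : Type where
  ν : K → ℤ
  ν_mul : ∀ x y : K, x ≠ 0 → y ≠ 0 → ν (x * y) = ν x + ν y
  ν_add : ∀ x y : K, x ≠ 0 → y ≠ 0 → x + y ≠ 0 → min (ν x) (ν y) ≤ ν (x + y)
  ν_one : ν 1 = 0
  ν_surj : ∀ n : ℤ, ∃ x : K, x ≠ 0 ∧ ν x = n

namespace DVal

variable {K : Type} [Field K]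

/-- `x` belongs to the valuation ring `O_K`. -/
def Int (V : DVal K) (x : K) : Prop := x = 0 ∨ 0 ≤ V.ν x

/-- `x` is a unit of the valuation ring `O_K`. -/
def IntUnit (V : DVal K) (x : K) : Prop := x ≠ 0 ∧ V.ν x = 0

/-- `x` belongs to the maximal ideal `m_K` of the valuation ring `O_K`. -/
def MaxIdeal (V : DVal K) (x : K) : Prop := x = 0 ∨ 1 ≤ V.ν x

/-- `K` is complete with respect to the valuation `ν`: every Cauchy sequence converges. -/
def IsComplete (V : DVal K) : Prop :=
  ∀ f : ℕ → K,
    (∀ M : ℤ, ∃ N : ℕ, ∀ m n : ℕ, N ≤ m → N ≤ n →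
      f m - f n = 0 ∨ M ≤ V.ν (f m - f n)) →
    ∃ L : K, ∀ M : ℤ, ∃ N : ℕ, ∀ n : ℕ, N ≤ n →
      f n - L = 0 ∨ M ≤ V.ν (f n - L)

/-- The residue field `k = O_K/m_K` has characteristic different from `2`,
i.e. `2` is a unit of the valuation ring `O_K`. -/
def ResCharNeTwo (V : DVal K) : Prop := (2 : K) ≠ 0 ∧ V.ν 2 = 0

end DVal

/-- The reduced norm of a quaternion `u = δ + αx + βy + γz ∈ ℍ[K,a,b]`:
`Nrd u = u·τ(u) = δ² - aα² - bβ² + abγ²`. -/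
def qnrd {K : Type} [Field K] (a b : K) (u : QuaternionAlgebra K a 0 b) : K :=
  u.re ^ 2 - a * u.imI ^ 2 - b * u.imJ ^ 2 + a * b * u.imK ^ 2

/-- The canonical involution `τ(δ + αx + βy + γz) = δ - αx - βy - γz` of `ℍ[K,a,b]`. -/
def qtau {K : Type} [Field K] {a b : K} (u : QuaternionAlgebra K a 0 b) :
    QuaternionAlgebra K a 0 b :=
  ⟨u.re, -u.imI, -u.imJ, -u.imK⟩

/-- The norm form `⟨1,-a,-b,ab⟩` of `ℍ[K,a,b]` is anisotropic over `K`
(equivalently, `ℍ[K,a,b]` is a division ring). -/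
def QAniso {K : Type} [Field K] (a b : K) : Prop :=
  ∀ d e f g : K, d ^ 2 - a * e ^ 2 - b * f ^ 2 + a * b * g ^ 2 = 0 →
    d = 0 ∧ e = 0 ∧ f = 0 ∧ g = 0

/-- The valuation `ν_D(u) = (1/2)·ν_K(Nrd u)` of the quaternion division algebra
`D = ℍ[K,a,b]` (at nonzero `u`). -/
def qnu {K : Type} [Field K] (V : DVal K) (a b : K) (u : QuaternionAlgebra K a 0 b) : ℚ :=
  (V.ν (qnrd a b u) : ℚ) / 2

open Quaternion

/-- Converges to a square root of `u` when `u ≡ 1 mod 𝔪` and `2` is a unit: each step multiplies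
the error `s² - u` by `1 - s ∈ 𝔪`, up to a term quadratic in the error. -/
def sqrtSeq {K : Type} [Field K] (u : K) : ℕ → K
  | 0 => 1
  | n + 1 => sqrtSeq u n - (sqrtSeq u n ^ 2 - u) / 2

namespace DVal

variable {K : Type} [Field K] {V : DVal K}

variable (V) in
/-- `x ∈ 𝔪^M`, reading `ν 0` as `+∞`. -/
def LeVal (M : ℤ) (x : K) : Prop := x = 0 ∨ M ≤ V.ν x

theorem nu_neg {x : K} (hx : x ≠ 0) : V.ν (-x) = V.ν x := by
  have h1 := V.ν_mul (-1) (-1) (by norm_num) (by norm_num)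
  have h2 := V.ν_mul (-1) x (by norm_num) hx
  rw [neg_one_mul, neg_neg, V.ν_one] at h1
  rw [neg_one_mul] at h2
  omega

theorem nu_inv {x : K} (hx : x ≠ 0) : V.ν x⁻¹ = -V.ν x := by
  have h := V.ν_mul _ _ (inv_ne_zero hx) hx
  rw [inv_mul_cancel₀ hx, V.ν_one] at h
  omega

theorem nu_pow {x : K} (hx : x ≠ 0) (n : ℕ) : V.ν (x ^ n) = n * V.ν x := by
  induction n with
  | zero => simpa using V.ν_one
  | succ n ih => rw [pow_succ, V.ν_mul _ _ (pow_ne_zero n hx) hx, ih]; push_cast; ring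

theorem nu_zpow {x : K} (hx : x ≠ 0) (n : ℤ) : V.ν (x ^ n) = n * V.ν x := by
  obtain ⟨m, rfl | rfl⟩ := Int.eq_nat_or_neg n
  · rw [zpow_natCast, nu_pow hx]
  · rw [zpow_neg, zpow_natCast, nu_inv (pow_ne_zero m hx), nu_pow hx]; ring

theorem leVal_zero (M : ℤ) : V.LeVal M 0 := Or.inl rfl

theorem leVal_nu (x : K) : V.LeVal (V.ν x) x := Or.inr le_rfl

theorem leVal_one : V.LeVal 0 1 := Or.inr V.ν_one.ge

theorem eq_zero_of_forall_leVal {x : K} (h : ∀ M, V.LeVal M x) : x = 0 :=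
  (h (V.ν x + 1)).resolve_right (by omega)

namespace LeVal

variable {M N : ℤ} {x y : K}

theorem nu_le (h : V.LeVal M x) (hx : x ≠ 0) : M ≤ V.ν x := h.resolve_left hx

theorem mono (h : V.LeVal M x) (hNM : N ≤ M) : V.LeVal N x := h.imp_right hNM.trans

theorem nu_eq (h : V.LeVal M x) (h' : ¬V.LeVal (M + 1) x) : x ≠ 0 ∧ V.ν x = M := by
  have hx : x ≠ 0 := fun hx => h' (Or.inl hx)
  exact ⟨hx, le_antisymm (by by_contra! hlt; exact h' (Or.inr hlt)) (h.nu_le hx)⟩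

theorem add (hx : V.LeVal M x) (hy : V.LeVal M y) : V.LeVal M (x + y) := by
  rcases eq_or_ne x 0 with rfl | hx0
  · simpa using hy
  rcases eq_or_ne y 0 with rfl | hy0
  · simpa using hx
  rcases eq_or_ne (x + y) 0 with hxy | hxy
  · exact Or.inl hxy
  exact Or.inr ((le_min (hx.nu_le hx0) (hy.nu_le hy0)).trans (V.ν_add x y hx0 hy0 hxy))

theorem neg (hx : V.LeVal M x) : V.LeVal M (-x) := by
  rcases eq_or_ne x 0 with rfl | hx0
  · simpa using leVal_zero M
  · exact Or.inr ((nu_neg hx0).symm ▸ hx.nu_le hx0)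

theorem sub (hx : V.LeVal M x) (hy : V.LeVal M y) : V.LeVal M (x - y) := by
  simpa [sub_eq_add_neg] using hx.add hy.neg

theorem mul (hx : V.LeVal M x) (hy : V.LeVal N y) : V.LeVal (M + N) (x * y) := by
  rcases eq_or_ne x 0 with rfl | hx0
  · simpa using leVal_zero _
  rcases eq_or_ne y 0 with rfl | hy0
  · simpa using leVal_zero _
  exact Or.inr (by rw [V.ν_mul x y hx0 hy0]; linarith [hx.nu_le hx0, hy.nu_le hy0])

theorem sq (h : V.LeVal M x) : V.LeVal (2 * M) (x ^ 2) := by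
  rw [_root_.sq, two_mul]
  exact h.mul h

theorem of_sq {m : ℤ} (h : V.LeVal (2 * m + 1) (x ^ 2)) : V.LeVal (m + 1) x := by
  rcases eq_or_ne x 0 with rfl | hx0
  · exact leVal_zero _
  have := h.nu_le (pow_ne_zero 2 hx0)
  rw [nu_pow hx0] at this
  exact Or.inr (by push_cast at this; omega)

end LeVal

theorem leVal_inv_two (h2 : V.ResCharNeTwo) : V.LeVal 0 (2⁻¹ : K) :=
  Or.inr (by rw [nu_inv h2.1, h2.2]; rfl)

theorem sqrtSeq_spec (h2 : V.ResCharNeTwo) {u : K} (hu : V.LeVal 1 (u - 1)) (n : ℕ) :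
    V.LeVal 1 (sqrtSeq u n - 1) ∧ V.LeVal (n + 1) (sqrtSeq u n ^ 2 - u) := by
  have h2' : (2 : K) ≠ 0 := h2.1
  induction n with
  | zero =>
    refine ⟨by simpa [sqrtSeq] using leVal_zero 1, ?_⟩
    have e : sqrtSeq u 0 ^ 2 - u = -(u - 1) := by simp [sqrtSeq]
    rw [e, Nat.cast_zero, zero_add]
    exact hu.neg
  | succ n ih =>
    obtain ⟨hs, hd⟩ := ih
    set s := sqrtSeq u n
    have hd1 : V.LeVal 1 (s ^ 2 - u) := hd.mono (by omega)
    have h4 : V.LeVal 0 (2⁻¹ * 2⁻¹ : K) := by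
      simpa using (leVal_inv_two h2).mul (leVal_inv_two h2)
    constructor
    · have : sqrtSeq u (n + 1) - 1 = (s - 1) - (s ^ 2 - u) * 2⁻¹ := by
        simp only [sqrtSeq, s]; ring
      rw [this]
      simpa using hs.sub (hd1.mul (leVal_inv_two h2))
    · have : sqrtSeq u (n + 1) ^ 2 - u =
          (s ^ 2 - u) * -(s - 1) + (s ^ 2 - u) * (s ^ 2 - u) * (2⁻¹ * 2⁻¹) := by
        simp only [sqrtSeq, s]; field_simp; ring
      rw [this]
      push_cast
      exact (hd.mul hs.neg).add (((hd.mul hd).mul h4).mono (by omega))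

theorem sqrtSeq_add_sub (h2 : V.ResCharNeTwo) {u : K} (hu : V.LeVal 1 (u - 1)) (n k : ℕ) :
    V.LeVal (n + 1) (sqrtSeq u (n + k) - sqrtSeq u n) := by
  induction k with
  | zero => simpa using leVal_zero _
  | succ k ih =>
    have hstep : sqrtSeq u (n + k + 1) - sqrtSeq u (n + k) =
        (sqrtSeq u (n + k) ^ 2 - u) * -2⁻¹ := by
      simp only [sqrtSeq]; ring
    have hd := (sqrtSeq_spec h2 hu (n + k)).2.mul (leVal_inv_two h2).neg
    rw [← hstep] at hd
    rw [← add_assoc, show sqrtSeq u (n + k + 1) - sqrtSeq u n =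
      (sqrtSeq u (n + k + 1) - sqrtSeq u (n + k)) + (sqrtSeq u (n + k) - sqrtSeq u n) by ring]
    exact (hd.mono (by push_cast; omega)).add ih

theorem exists_sq_eq (hcomp : V.IsComplete) (h2 : V.ResCharNeTwo) {u : K}
    (hu : V.LeVal 1 (u - 1)) : ∃ s : K, s ^ 2 = u := by
  have hcauchy : ∀ M : ℤ, ∃ N : ℕ, ∀ m n : ℕ, N ≤ m → N ≤ n →
      V.LeVal M (sqrtSeq u m - sqrtSeq u n) := by
    intro M
    refine ⟨M.toNat, fun m n hm hn => ?_⟩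
    obtain ⟨k, rfl⟩ := Nat.exists_eq_add_of_le hm
    obtain ⟨l, rfl⟩ := Nat.exists_eq_add_of_le hn
    have h := (sqrtSeq_add_sub h2 hu M.toNat k).sub (sqrtSeq_add_sub h2 hu M.toNat l)
    simpa using h.mono (by omega)
  obtain ⟨L, hL⟩ := hcomp _ hcauchy
  refine ⟨L, sub_eq_zero.1 (eq_zero_of_forall_leVal (V := V) fun M => ?_)⟩
  obtain ⟨N, hN⟩ := hL (max M 0)
  set n := max N M.toNat
  have hclose : V.LeVal (max M 0) (sqrtSeq u n - L) := hN n (le_max_left _ _)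
  obtain ⟨hs, hd⟩ := sqrtSeq_spec h2 hu n
  have hs0 : V.LeVal 0 (sqrtSeq u n) := by
    simpa using (hs.mono zero_le_one).add leVal_one
  have hsum : V.LeVal 0 (sqrtSeq u n + L) := by
    rw [show sqrtSeq u n + L = (sqrtSeq u n + sqrtSeq u n) - (sqrtSeq u n - L) by ring]
    exact (hs0.add hs0).sub (hclose.mono (le_max_right _ _))
  have : L ^ 2 - u = (sqrtSeq u n ^ 2 - u) - (sqrtSeq u n - L) * (sqrtSeq u n + L) := by ring
  rw [this]
  refine (hd.mono ?_).sub ((hclose.mul hsum).mono ?_)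
  · have : (M.toNat : ℤ) ≤ n := by exact_mod_cast le_max_right N M.toNat
    omega
  · simp

theorem exists_sq_mul_eq_add (hcomp : V.IsComplete) (h2 : V.ResCharNeTwo) {x y : K}
    (hx : x ≠ 0) (hy : V.LeVal (V.ν x + 1) y) : ∃ s : K, s ^ 2 * x = x + y := by
  have hu : V.LeVal 1 ((1 + y / x) - 1) := by
    have := hy.mul (leVal_nu x⁻¹)
    rw [nu_inv hx] at this
    simpa [div_eq_mul_inv] using this
  obtain ⟨s, hs⟩ := exists_sq_eq hcomp h2 hu
  exact ⟨s, by rw [hs]; field_simp⟩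

theorem exists_leVal_min {p q : K} (h : ¬(p = 0 ∧ q = 0)) :
    ∃ m, V.LeVal m p ∧ V.LeVal m q ∧ ¬(V.LeVal (m + 1) p ∧ V.LeVal (m + 1) q) := by
  rcases eq_or_ne p 0 with rfl | hp
  · have hq : q ≠ 0 := fun hq => h ⟨rfl, hq⟩
    exact ⟨V.ν q, leVal_zero _, leVal_nu q, fun h' => by have := h'.2.nu_le hq; omega⟩
  rcases eq_or_ne q 0 with rfl | hq
  · exact ⟨V.ν p, leVal_nu p, leVal_zero _, fun h' => by have := h'.1.nu_le hp; omega⟩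
  refine ⟨min (V.ν p) (V.ν q), Or.inr (min_le_left _ _), Or.inr (min_le_right _ _), ?_⟩
  rintro ⟨h1, h2⟩
  have := h1.nu_le hp
  have := h2.nu_le hq
  omega

variable {a : K}

theorem nu_sq_sub_mul_sq (hcomp : V.IsComplete) (h2 : V.ResCharNeTwo) (ha : ¬IsSquare a)
    (hva : V.ν a = 0) {p q : K} {m : ℤ} (hp : V.LeVal m p) (hq : V.LeVal m q)
    (hpq : ¬(V.LeVal (m + 1) p ∧ V.LeVal (m + 1) q)) :
    p ^ 2 - a * q ^ 2 ≠ 0 ∧ V.ν (p ^ 2 - a * q ^ 2) = 2 * m := by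
  have ha0 : a ≠ 0 := by rintro rfl; exact ha IsSquare.zero
  have hva' : V.LeVal 0 a := hva ▸ leVal_nu a
  have haq : ∀ {k}, V.LeVal k q → V.LeVal (2 * k) (a * q ^ 2) := fun h => by
    simpa using hva'.mul h.sq
  refine (hp.sq.sub (haq hq)).nu_eq fun hlt => ?_
  by_cases hq1 : V.LeVal (m + 1) q
  · refine hpq ⟨LeVal.of_sq ?_, hq1⟩
    rw [show p ^ 2 = (p ^ 2 - a * q ^ 2) + a * q ^ 2 by ring]
    exact hlt.add ((haq hq1).mono (by omega))
  obtain ⟨hq0, hqm⟩ := hq.nu_eq hq1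
  have haq0 : a * q ^ 2 ≠ 0 := mul_ne_zero ha0 (pow_ne_zero 2 hq0)
  have hνaq : V.ν (a * q ^ 2) = 2 * m := by
    rw [V.ν_mul _ _ ha0 (pow_ne_zero 2 hq0), hva, nu_pow hq0, hqm]; ring
  by_cases hp1 : V.LeVal (m + 1) p
  · have : V.LeVal (2 * m + 1) (a * q ^ 2) := by
      rw [show a * q ^ 2 = p ^ 2 - (p ^ 2 - a * q ^ 2) by ring]
      exact (hp1.sq.mono (by omega)).sub hlt
    have := this.nu_le haq0
    omega
  obtain ⟨hp0, hpm⟩ := hp.nu_eq hp1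
  have hy : V.LeVal (V.ν (p ^ 2) + 1) (a * q ^ 2 - p ^ 2) := by
    rw [nu_pow hp0, hpm, ← neg_sub]
    exact_mod_cast hlt.neg
  obtain ⟨s, hs⟩ := exists_sq_mul_eq_add hcomp h2 (pow_ne_zero 2 hp0) hy
  exact ha ⟨s * p / q, by field_simp; linear_combination -hs⟩

theorem exists_nu_sq_sub_mul_sq (hcomp : V.IsComplete) (h2 : V.ResCharNeTwo)
    (ha : ¬IsSquare a) (hva : V.ν a = 0) {p q : K} (h : ¬(p = 0 ∧ q = 0)) :
    ∃ m, V.LeVal m p ∧ V.LeVal m q ∧ p ^ 2 - a * q ^ 2 ≠ 0 ∧ V.ν (p ^ 2 - a * q ^ 2) = 2 * m :=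
  let ⟨m, hp, hq, hpq⟩ := exists_leVal_min (V := V) h
  ⟨m, hp, hq, nu_sq_sub_mul_sq hcomp h2 ha hva hp hq hpq⟩

end DVal

theorem star_mul_eq_or_eq_neg {A : Type*} [Ring A] [StarRing A] {lam mu u : A}
    (hmu : lam * mu = 1) (hmu' : mu * lam = 1) (hlam : star lam = lam ∨ star lam = -lam)
    (hu : lam * star u * mu = u ∨ lam * star u * mu = -u) :
    star (mu * u) = mu * u ∨ star (mu * u) = -(mu * u) := by
  have hstar_mu : star mu = mu ∨ star mu = -mu := by
    have key : star mu * star lam = 1 := by rw [← star_mul, hmu, star_one]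
    rcases hlam with h | h
    · left
      calc star mu = star mu * (lam * mu) := by rw [hmu, mul_one]
        _ = mu := by rw [← mul_assoc, ← h, key, one_mul]
    · right
      calc star mu = -(star mu * (-lam * mu)) := by rw [neg_mul, hmu, mul_neg, mul_one, neg_neg]
        _ = -mu := by rw [← mul_assoc, ← h, key, one_mul]
  have hstar_u : star u = mu * u * lam ∨ star u = -(mu * u * lam) := by
    have hconj : mu * (lam * star u * mu) * lam = star u := by
      simp only [← mul_assoc, hmu', one_mul]; rw [mul_assoc, hmu', mul_one]
    rcases hu with h | h <;> rw [h] at hconj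
    · exact Or.inl hconj.symm
    · exact Or.inr (by rw [← hconj]; noncomm_ring)
  have e : mu * u * lam * mu = mu * u := by rw [mul_assoc, hmu, mul_one]
  rcases hstar_u with h₁ | h₁ <;> rcases hstar_mu with h₂ | h₂ <;> simp [star_mul, h₁, h₂, e]

namespace QuaternionAlgebra

variable {R : Type*} [CommRing R] {c₁ c₂ c₃ : R}

/-- `ℍ[R,c₁,c₂,c₃] = L ⊕ L·j` with `L = R ⊕ R·i` is `ℤ/2`-graded; `IsEven` and `IsOdd` cut out
the two graded pieces. -/
def IsEven (v : ℍ[R,c₁,c₂,c₃]) : Prop := v.imJ = 0 ∧ v.imK = 0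

def IsOdd (v : ℍ[R,c₁,c₂,c₃]) : Prop := v.re = 0 ∧ v.imI = 0

def IsHomogeneous (v : ℍ[R,c₁,c₂,c₃]) : Prop := v.IsEven ∨ v.IsOdd

theorem IsHomogeneous.mul {u v : ℍ[R,c₁,c₂,c₃]} (hu : u.IsHomogeneous)
    (hv : v.IsHomogeneous) : (u * v).IsHomogeneous := by
  obtain ⟨u₁, u₂, u₃, u₄⟩ := u
  obtain ⟨v₁, v₂, v₃, v₄⟩ := v
  rcases hu with ⟨hu₃, hu₄⟩ | ⟨hu₁, hu₂⟩ <;> rcases hv with ⟨hv₃, hv₄⟩ | ⟨hv₁, hv₂⟩ <;>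
    dsimp only at * <;> subst_vars
  · exact Or.inl ⟨by simp, by simp⟩
  · exact Or.inr ⟨by simp, by simp⟩
  · exact Or.inr ⟨by simp, by simp⟩
  · exact Or.inl ⟨by simp, by simp⟩

theorem IsHomogeneous.star {v : ℍ[R,c₁,c₂,c₃]} (hv : v.IsHomogeneous) :
    (star v).IsHomogeneous := by
  rcases hv with ⟨h₃, h₄⟩ | ⟨h₁, h₂⟩
  · exact Or.inl ⟨by simp [h₃], by simp [h₄]⟩
  · exact Or.inr ⟨by simp [h₁, h₂], by simp [h₂]⟩

theorem IsHomogeneous.smul {v : ℍ[R,c₁,c₂,c₃]} (hv : v.IsHomogeneous) (r : R) :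
    (r • v).IsHomogeneous := by
  rcases hv with ⟨h₃, h₄⟩ | ⟨h₁, h₂⟩
  · exact Or.inl ⟨by simp [h₃], by simp [h₄]⟩
  · exact Or.inr ⟨by simp [h₁], by simp [h₂]⟩

theorem isHomogeneous_and_star_of_eq_basis {lam : ℍ[R,c₁,0,c₃]}
    (h : lam = 1 ∨ lam = ⟨0, 1, 0, 0⟩ ∨ lam = ⟨0, 0, 1, 0⟩) :
    lam.IsHomogeneous ∧ (star lam = lam ∨ star lam = -lam) := by
  rcases h with rfl | rfl | rfl
  · exact ⟨Or.inl ⟨rfl, rfl⟩, Or.inl (star_one _)⟩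
  · exact ⟨Or.inl ⟨rfl, rfl⟩, Or.inr (by ext <;> simp)⟩
  · exact ⟨Or.inr ⟨rfl, rfl⟩, Or.inr (by ext <;> simp)⟩

end QuaternionAlgebra

open QuaternionAlgebra

section ReducedNorm

variable {K : Type} [Field K] {a ϖ : K}

theorem qtau_eq_star (u : ℍ[K,a,0,ϖ]) : qtau u = star u := by
  ext <;> simp [qtau]

theorem star_mul_self_eq_qnrd (u : ℍ[K,a,0,ϖ]) :
    star u * u = ((qnrd a ϖ u : K) : ℍ[K,a,0,ϖ]) := by
  ext <;> simp [qnrd, -QuaternionAlgebra.coe_add, -QuaternionAlgebra.coe_sub,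
    -QuaternionAlgebra.coe_mul, -QuaternionAlgebra.coe_pow] <;> ring

theorem qnrd_mul (u v : ℍ[K,a,0,ϖ]) : qnrd a ϖ (u * v) = qnrd a ϖ u * qnrd a ϖ v := by
  simp [qnrd]; ring

theorem qnrd_star (u : ℍ[K,a,0,ϖ]) : qnrd a ϖ (star u) = qnrd a ϖ u := by
  simp [qnrd]

theorem qnrd_star_mul_mul (s w : ℍ[K,a,0,ϖ]) :
    qnrd a ϖ (star s * w * s) = qnrd a ϖ s ^ 2 * qnrd a ϖ w := by
  rw [qnrd_mul, qnrd_mul, qnrd_star]; ring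

theorem isUnit_of_qnrd_ne_zero {u : ℍ[K,a,0,ϖ]} (hu : qnrd a ϖ u ≠ 0) : IsUnit u := by
  have hinv : (qnrd a ϖ u)⁻¹ • star u * u = 1 := by
    rw [smul_mul_assoc, star_mul_self_eq_qnrd, ← coe_mul_eq_smul, ← coe_mul, inv_mul_cancel₀ hu,
      QuaternionAlgebra.coe_one]
  refine ⟨⟨u, (qnrd a ϖ u)⁻¹ • star u, ?_, hinv⟩, rfl⟩
  rw [mul_smul_comm, ← star_comm_self', ← smul_mul_assoc, hinv]

theorem QAniso.qnrd_ne_zero (haniso : QAniso a ϖ) {u : ℍ[K,a,0,ϖ]} (hu : u ≠ 0) :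
    qnrd a ϖ u ≠ 0 := fun h => by
  obtain ⟨h₁, h₂, h₃, h₄⟩ := haniso u.re u.imI u.imJ u.imK h
  exact hu (QuaternionAlgebra.ext h₁ h₂ h₃ h₄)

theorem QAniso.not_isSquare (haniso : QAniso a ϖ) : ¬IsSquare a := fun ⟨d, hd⟩ =>
  one_ne_zero (haniso d 1 0 0 (by rw [hd]; ring)).2.1

/-- `w (w + w₀) = (w + w₀) w₀`, and `star t * t` is the scalar `Nrd t`. -/
theorem star_add_mul_mul_add {w w₀ : ℍ[K,a,0,ϖ]} (h : w * w = w₀ * w₀) :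
    star (w + w₀) * w * (w + w₀) = qnrd a ϖ (w + w₀) • w₀ := by
  rw [mul_assoc, show w * (w + w₀) = (w + w₀) * w₀ by rw [mul_add, add_mul, h, add_comm],
    ← mul_assoc, star_mul_self_eq_qnrd, coe_mul_eq_smul]

theorem exists_star_mul_mul_eq_smul (haniso : QAniso a ϖ) {w w₀ : ℍ[K,a,0,ϖ]}
    (h : w * w = w₀ * w₀) : ∃ t, qnrd a ϖ t ≠ 0 ∧ ∃ c : K, star t * w * t = c • w₀ := by
  by_cases hw : w + w₀ = 0
  · exact ⟨1, by simp [qnrd], -1, by simp [eq_neg_of_add_eq_zero_left hw]⟩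
  · exact ⟨w + w₀, haniso.qnrd_ne_zero hw, _, star_add_mul_mul_add h⟩

theorem mul_self_of_re_eq_zero {w : ℍ[K,a,0,ϖ]} (hw : w.re = 0) :
    w * w = ⟨a * w.imI ^ 2 + ϖ * (w.imJ ^ 2 - a * w.imK ^ 2), 0, 0, 0⟩ := by
  ext <;> simp [hw] <;> ring

end ReducedNorm

section Reduction

open DVal

variable {K : Type} [Field K] {V : DVal K} {a ϖ : K}

theorem exists_isHomogeneous_mul_self_eq (hcomp : V.IsComplete) (h2 : V.ResCharNeTwo)
    (ha : ¬IsSquare a) (hva : V.ν a = 0) (hϖ0 : ϖ ≠ 0) (hvϖ : V.ν ϖ = 1)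
    {w : ℍ[K,a,0,ϖ]} (hw : w.re = 0) :
    ∃ w₀ : ℍ[K,a,0,ϖ], w₀.IsHomogeneous ∧ w₀ * w₀ = w * w := by
  obtain ⟨_, α, β, γ⟩ := w
  dsimp only at hw
  subst hw
  by_cases hβγ : β = 0 ∧ γ = 0
  · exact ⟨⟨0, α, β, γ⟩, Or.inl hβγ, rfl⟩
  rw [mul_self_of_re_eq_zero rfl]
  obtain ⟨m, -, -, hN, hNm⟩ := exists_nu_sq_sub_mul_sq hcomp h2 ha hva hβγ
  have hN₁ : ϖ * (β ^ 2 - a * γ ^ 2) ≠ 0 := mul_ne_zero hϖ0 hN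
  have hN₁ν : V.ν (ϖ * (β ^ 2 - a * γ ^ 2)) = 2 * m + 1 := by
    rw [V.ν_mul _ _ hϖ0 hN, hvϖ, hNm]; ring
  by_cases hN₀ : V.LeVal (V.ν (ϖ * (β ^ 2 - a * γ ^ 2)) + 1) (a * α ^ 2)
  · obtain ⟨s, hs⟩ := exists_sq_mul_eq_add hcomp h2 hN₁ hN₀
    refine ⟨⟨0, 0, s * β, s * γ⟩, Or.inr ⟨rfl, rfl⟩, ?_⟩
    ext <;> simp
    · linear_combination hs
    · ring
  · have hα : α ≠ 0 := by rintro rfl; exact hN₀ (Or.inl (by ring))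
    have ha0 : a ≠ 0 := by rintro rfl; exact ha IsSquare.zero
    have hN₀' : a * α ^ 2 ≠ 0 := mul_ne_zero ha0 (pow_ne_zero 2 hα)
    have hN₀ν : V.ν (a * α ^ 2) = 2 * V.ν α := by
      rw [V.ν_mul _ _ ha0 (pow_ne_zero 2 hα), hva, nu_pow hα]; ring
    -- the two values have different parity
    have hlt : V.LeVal (V.ν (a * α ^ 2) + 1) (ϖ * (β ^ 2 - a * γ ^ 2)) :=
      Or.inr (by by_contra h; exact hN₀ (Or.inr (by omega)))
    obtain ⟨s, hs⟩ := exists_sq_mul_eq_add hcomp h2 hN₀' hlt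
    refine ⟨⟨0, s * α, 0, 0⟩, Or.inl ⟨rfl, rfl⟩, ?_⟩
    ext <;> simp
    linear_combination hs

theorem exists_isHomogeneous_star_mul_mul (hcomp : V.IsComplete) (h2 : V.ResCharNeTwo)
    (hva : V.ν a = 0) (hϖ0 : ϖ ≠ 0) (hvϖ : V.ν ϖ = 1) (haniso : QAniso a ϖ)
    {w : ℍ[K,a,0,ϖ]} (hw : star w = w ∨ star w = -w) :
    ∃ t, qnrd a ϖ t ≠ 0 ∧ (star t * w * t).IsHomogeneous := by
  have h2x : ∀ x : K, -x = x → x = 0 := fun x h => by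
    have : 2 * x = 0 := by linear_combination -h
    exact (mul_eq_zero.1 this).resolve_left h2.1
  rcases hw with hw | hw
  · refine ⟨1, by simp [qnrd], Or.inl ?_⟩
    simp only [star_one, one_mul, mul_one]
    exact ⟨h2x _ (by simpa using congrArg imJ hw), h2x _ (by simpa using congrArg imK hw)⟩
  · have hre : w.re = 0 := h2x _ (by simpa using (congrArg re hw).symm)
    obtain ⟨w₀, hw₀, hsq⟩ :=
      exists_isHomogeneous_mul_self_eq hcomp h2 haniso.not_isSquare hva hϖ0 hvϖ hre
    obtain ⟨t, ht, c, hc⟩ := exists_star_mul_mul_eq_smul haniso hsq.symm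
    exact ⟨t, ht, hc ▸ hw₀.smul c⟩

theorem exists_isHomogeneous_nu_qnrd_eq (hϖ0 : ϖ ≠ 0) (hvϖ : V.ν ϖ = 1) (k : ℤ) :
    ∃ s : ℍ[K,a,0,ϖ], s.IsHomogeneous ∧ qnrd a ϖ s ≠ 0 ∧ V.ν (qnrd a ϖ s) = k := by
  set c := ϖ ^ (k / 2)
  have hc : c ^ 2 ≠ 0 := pow_ne_zero 2 (zpow_ne_zero _ hϖ0)
  have hcν : V.ν (c ^ 2) = 2 * (k / 2) := by
    rw [nu_pow (zpow_ne_zero _ hϖ0), nu_zpow hϖ0, hvϖ]; ring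
  rcases Int.emod_two_eq_zero_or_one k with hk | hk
  · refine ⟨⟨c, 0, 0, 0⟩, Or.inl ⟨rfl, rfl⟩, ?_⟩
    have hq : qnrd a ϖ ⟨c, 0, 0, 0⟩ = c ^ 2 := by simp [qnrd]
    exact hq ▸ ⟨hc, by omega⟩
  · refine ⟨⟨0, 0, c, 0⟩, Or.inr ⟨rfl, rfl⟩, ?_⟩
    have hq : qnrd a ϖ ⟨0, 0, c, 0⟩ = -(ϖ * c ^ 2) := by simp [qnrd]
    have hN : ϖ * c ^ 2 ≠ 0 := mul_ne_zero hϖ0 hc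
    rw [hq, nu_neg hN, V.ν_mul _ _ hϖ0 hc, hvϖ, hcν]
    exact ⟨neg_ne_zero.2 hN, by omega⟩

variable (V) in
def IsNormalForm (v : ℍ[K,a,0,ϖ]) : Prop :=
  (v.imJ = 0 ∧ v.imK = 0 ∧ V.Int v.re ∧ V.Int v.imI ∧ qnu V a ϖ v = 0) ∨
    (v.re = 0 ∧ v.imI = 0 ∧ V.Int v.imJ ∧ V.Int v.imK ∧ qnu V a ϖ v = 1 / 2)

theorem isNormalForm_of_isHomogeneous (hcomp : V.IsComplete) (h2 : V.ResCharNeTwo)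
    (ha : ¬IsSquare a) (hva : V.ν a = 0) (hϖ0 : ϖ ≠ 0) (hvϖ : V.ν ϖ = 1)
    {v : ℍ[K,a,0,ϖ]} (hv : v.IsHomogeneous) (hN : qnrd a ϖ v ≠ 0)
    (hν : V.ν (qnrd a ϖ v) = 0 ∨ V.ν (qnrd a ϖ v) = 1) : IsNormalForm V v := by
  rcases hv with ⟨h₃, h₄⟩ | ⟨h₁, h₂⟩
  · have hq : qnrd a ϖ v = v.re ^ 2 - a * v.imI ^ 2 := by simp [qnrd, h₃, h₄]
    have hne : ¬(v.re = 0 ∧ v.imI = 0) := fun h => hN (by rw [hq, h.1, h.2]; ring)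
    obtain ⟨m, hp, hq', -, hm⟩ := exists_nu_sq_sub_mul_sq hcomp h2 ha hva hne
    rw [hq, hm] at hν
    obtain rfl : m = 0 := by omega
    exact Or.inl ⟨h₃, h₄, hp, hq', by simp [qnu, hq, hm]⟩
  · have hq : qnrd a ϖ v = -(ϖ * (v.imJ ^ 2 - a * v.imK ^ 2)) := by
      simp [qnrd, h₁, h₂]; ring
    have hne : ¬(v.imJ = 0 ∧ v.imK = 0) := fun h => hN (by rw [hq, h.1, h.2]; ring)
    obtain ⟨m, hp, hq', hN', hm⟩ := exists_nu_sq_sub_mul_sq hcomp h2 ha hva hne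
    have hνm : V.ν (qnrd a ϖ v) = 2 * m + 1 := by
      rw [hq, nu_neg (mul_ne_zero hϖ0 hN'), V.ν_mul _ _ hϖ0 hN', hvϖ, hm]; ring
    rw [hνm] at hν
    obtain rfl : m = 0 := by omega
    exact Or.inr ⟨h₁, h₂, hp, hq', by simp [qnu, hνm]⟩

theorem exists_isNormalForm_mul_star_mul_mul (hcomp : V.IsComplete) (h2 : V.ResCharNeTwo)
    (hva : V.ν a = 0) (hϖ0 : ϖ ≠ 0) (hvϖ : V.ν ϖ = 1) (haniso : QAniso a ϖ)
    {lam w : ℍ[K,a,0,ϖ]} (hlam : lam.IsHomogeneous) (hlam0 : qnrd a ϖ lam ≠ 0)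
    (hw : w.IsHomogeneous) (hw0 : qnrd a ϖ w ≠ 0) :
    ∃ s, qnrd a ϖ s ≠ 0 ∧ IsNormalForm V (lam * (star s * w * s)) := by
  set n := V.ν (qnrd a ϖ lam) + V.ν (qnrd a ϖ w)
  obtain ⟨s, hs, hs0, hsν⟩ := exists_isHomogeneous_nu_qnrd_eq (a := a) hϖ0 hvϖ (-(n / 2))
  have hs2 : qnrd a ϖ s ^ 2 * qnrd a ϖ w ≠ 0 := mul_ne_zero (pow_ne_zero 2 hs0) hw0
  refine ⟨s, hs0, isNormalForm_of_isHomogeneous hcomp h2 haniso.not_isSquare hva hϖ0 hvϖ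
    (hlam.mul ((hs.star.mul hw).mul hs)) ?_ ?_⟩ <;> rw [qnrd_mul, qnrd_star_mul_mul]
  · exact mul_ne_zero hlam0 hs2
  · rw [V.ν_mul _ _ hlam0 hs2, V.ν_mul _ _ (pow_ne_zero 2 hs0) hw0, nu_pow hs0, hsν]
    omega

end Reduction

theorem stmt_19_general (K : Type) [Field K] (V : DVal K)
    -- K is complete with residue field of characteristic ≠ 2
    (hcomp : V.IsComplete) (hchar : V.ResCharNeTwo)
    -- D = ℍ[K,a,ϖ] with a ∈ O_K^×, ϖ a uniformizer, D a division ring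
    (a ϖ : K) (hva : V.ν a = 0) (hϖ0 : ϖ ≠ 0) (hvϖ : V.ν ϖ = 1)
    (haniso : QAniso a ϖ)
    -- σ = τ_λ with λ ∈ {1, x, y} (μ = λ⁻¹)
    (lam mu : QuaternionAlgebra K a 0 ϖ)
    (hlam : lam = 1 ∨ lam = (⟨0, 1, 0, 0⟩ : QuaternionAlgebra K a 0 ϖ) ∨ lam = (⟨0, 0, 1, 0⟩ : QuaternionAlgebra K a 0 ϖ))
    (hmu : lam * mu = 1) (hmu' : mu * lam = 1)
    (σ : QuaternionAlgebra K a 0 ϖ → QuaternionAlgebra K a 0 ϖ)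
    (hσ : ∀ u, σ u = lam * qtau u * mu)
    -- ε ∈ {1, -1} and u is a nonzero ε-symmetric element
    (ε : K) (hε : ε = 1 ∨ ε = -1)
    (u : QuaternionAlgebra K a 0 ϖ) (hu0 : u ≠ 0) (hsym : σ u = ε • u) :
    ∃ t : QuaternionAlgebra K a 0 ϖ, IsUnit t ∧
      (((σ t * u * t).imJ = 0 ∧ (σ t * u * t).imK = 0 ∧
          V.Int (σ t * u * t).re ∧ V.Int (σ t * u * t).imI ∧
          qnu V a ϖ (σ t * u * t) = 0) ∨
        ((σ t * u * t).re = 0 ∧ (σ t * u * t).imI = 0 ∧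
          V.Int (σ t * u * t).imJ ∧ V.Int (σ t * u * t).imK ∧
          qnu V a ϖ (σ t * u * t) = 1 / 2)) := by
  obtain ⟨hlam_hom, hlam_star⟩ := isHomogeneous_and_star_of_eq_basis hlam
  have hw : star (mu * u) = mu * u ∨ star (mu * u) = -(mu * u) := by
    refine star_mul_eq_or_eq_neg hmu hmu' hlam_star ?_
    rw [← qtau_eq_star, ← hσ, hsym]
    rcases hε with rfl | rfl <;> simp
  have hw0 : mu * u ≠ 0 := fun h => hu0 (by rw [← one_mul u, ← hmu, mul_assoc, h, mul_zero])
  obtain ⟨t, ht, hw₁⟩ := exists_isHomogeneous_star_mul_mul hcomp hchar hva hϖ0 hvϖ haniso hw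
  have hlam0 : qnrd a ϖ lam ≠ 0 :=
    left_ne_zero_of_mul_eq_one (by rw [← qnrd_mul, hmu]; simp [qnrd])
  obtain ⟨s, hs, hnf⟩ := exists_isNormalForm_mul_star_mul_mul hcomp hchar hva hϖ0 hvϖ haniso
    hlam_hom hlam0 hw₁
    (by rw [qnrd_star_mul_mul]; exact mul_ne_zero (pow_ne_zero 2 ht) (haniso.qnrd_ne_zero hw0))
  refine ⟨t * s, isUnit_of_qnrd_ne_zero (by rw [qnrd_mul]; exact mul_ne_zero ht hs), ?_⟩
  have hv : σ (t * s) * u * (t * s) = lam * (star s * (star t * (mu * u) * t) * s) := by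
    rw [hσ, qtau_eq_star, star_mul]; simp only [mul_assoc]
  rw [hv]
  exact hnf

/-- every one-dimensional ε-hermitian form over `(ℍ[K,a,ϖ], τ_λ)`,
`λ ∈ {1,x,y}`, is isometric either to a form with unit diagonal entry in the `O_K`-span of
`{1, x}`, or to a form with diagonal entry of value `1/2` in the `O_K`-span of `{y, z}`. -/
theorem stmt_19 (K : Type) [Field K] (V : DVal K)
    -- K is complete with residue field of characteristic ≠ 2
    (hcomp : V.IsComplete) (hchar : V.ResCharNeTwo)
    -- D = ℍ[K,a,ϖ] with a ∈ O_K^×, ϖ a uniformizer, D a division ring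
    (a ϖ : K) (ha0 : a ≠ 0) (hva : V.ν a = 0) (hϖ0 : ϖ ≠ 0) (hvϖ : V.ν ϖ = 1)
    (haniso : QAniso a ϖ)
    -- σ = τ_λ with λ ∈ {1, x, y} (μ = λ⁻¹)
    (lam mu : QuaternionAlgebra K a 0 ϖ)
    (hlam : lam = 1 ∨ lam = (⟨0, 1, 0, 0⟩ : QuaternionAlgebra K a 0 ϖ) ∨ lam = (⟨0, 0, 1, 0⟩ : QuaternionAlgebra K a 0 ϖ))
    (hmu : lam * mu = 1) (hmu' : mu * lam = 1)
    (σ : QuaternionAlgebra K a 0 ϖ → QuaternionAlgebra K a 0 ϖ)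
    (hσ : ∀ u, σ u = lam * qtau u * mu)
    -- ε ∈ {1, -1} and u is a nonzero ε-symmetric element
    (ε : K) (hε : ε = 1 ∨ ε = -1)
    (u : QuaternionAlgebra K a 0 ϖ) (hu0 : u ≠ 0) (hsym : σ u = ε • u) :
    ∃ t : QuaternionAlgebra K a 0 ϖ, IsUnit t ∧
      (((σ t * u * t).imJ = 0 ∧ (σ t * u * t).imK = 0 ∧
          V.Int (σ t * u * t).re ∧ V.Int (σ t * u * t).imI ∧
          qnu V a ϖ (σ t * u * t) = 0) ∨
        ((σ t * u * t).re = 0 ∧ (σ t * u * t).imI = 0 ∧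
          V.Int (σ t * u * t).imJ ∧ V.Int (σ t * u * t).imK ∧
          qnu V a ϖ (σ t * u * t) = 1 / 2)) :=
  stmt_19_general K V hcomp hchar a ϖ hva hϖ0 hvϖ haniso lam mu hlam hmu hmu' σ hσ ε hε u hu0 hsym
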